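/- Let L be a 4-dimensional complex vector space, let α ∈ ⋀²L, and let v₁ ∈ L be nonzero. Then there exist u, v, w ∈ L such that α = v₁∧u + v∧w. -/

import Mathlib

/-!
Extend `v₁` to a spanning family `v₁, f₀, f₁, f₂` of `L` and expand `α` in the products of
its members. Collecting the terms that involve `v₁` gives `α = v₁ ∧ u + β` with `β` a
2-vector in `f₀, f₁, f₂`, and in three vectors every 2-vector is decomposable:
`p f₀f₁ + q f₀f₂ + r f₁f₂ = (f₀ - (r / p) f₂)(p f₁ + q f₂)` when `p ≠ 0`, and similarly
in the degenerate cases.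
-/

open ExteriorAlgebra

open Module Submodule in
theorem exists_span_range_fin_cons_eq_top {K V : Type*} [DivisionRing K] [AddCommGroup V]
    [Module K V] {n : ℕ} (hV : finrank K V = n + 1) {v : V} (hv : v ≠ 0) :
    ∃ f : Fin n → V, span K (Set.range (Fin.cons v f : Fin (n + 1) → V)) = ⊤ := by
  have : FiniteDimensional K V := Module.finite_of_finrank_pos (by omega)
  obtain ⟨W, hW⟩ := (K ∙ v).exists_isCompl
  have hWrank : finrank K W = n := by
    have := finrank_add_eq_of_isCompl hW
    rw [finrank_span_singleton hv, hV] at this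
    omega
  let b := finBasisOfFinrankEq K W hWrank
  refine ⟨W.subtype ∘ b, ?_⟩
  rw [Fin.range_cons, span_insert, Set.range_comp, span_image, b.span_eq, map_subtype_top,
    hW.sup_eq_top]

section CommRing

variable {R M : Type*} [CommRing R] [AddCommGroup M] [Module R M]

theorem ι_mul_ι_comm (x y : M) : ι R x * ι R y = -(ι R y * ι R x) :=
  eq_neg_of_add_eq_zero_left (ι_add_mul_swap x y)

theorem exists_eq_sum_smul_ι_mul_ι {I : Type*} [Fintype I] {e : I → M}
    (he : Submodule.span R (Set.range e) = ⊤) {α : ExteriorAlgebra R M}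
    (hα : α ∈ ⋀[R]^2 M) :
    ∃ c : I → I → R, α = ∑ i, ∑ j, c i j • (ι R (e i) * ι R (e j)) := by
  have coords (x : M) : ∃ a : I → R, ∑ i, a i • e i = x :=
    (Submodule.mem_span_range_iff_exists_fun R).mp (he ▸ Submodule.mem_top)
  suffices α ∈ Submodule.span R (Set.range fun p : I × I ↦ ι R (e p.1) * ι R (e p.2)) by
    obtain ⟨c, hc⟩ := (Submodule.mem_span_range_iff_exists_fun R).mp this
    exact ⟨fun i j ↦ c (i, j), by rw [← hc, Fintype.sum_prod_type]⟩
  rw [exteriorPower, pow_two] at hα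
  refine Submodule.mul_induction_on hα ?_ fun _ _ ↦ Submodule.add_mem _
  rintro _ ⟨x, rfl⟩ _ ⟨y, rfl⟩
  obtain ⟨a, rfl⟩ := coords x
  obtain ⟨b, rfl⟩ := coords y
  simp only [map_sum, map_smul, Finset.sum_mul_sum, smul_mul_smul_comm]
  exact Submodule.sum_mem _ fun i _ ↦ Submodule.sum_mem _ fun j _ ↦
    Submodule.smul_mem _ _ (Submodule.subset_span ⟨(i, j), rfl⟩)

theorem sum_smul_ι_fin_cons_mul_ι_fin_cons {n : ℕ} (v : M) (f : Fin n → M)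
    (c : Fin (n + 1) → Fin (n + 1) → R) :
    ∑ i, ∑ j, c i j •
        (ι R ((Fin.cons v f : Fin (n + 1) → M) i) * ι R ((Fin.cons v f : Fin (n + 1) → M) j)) =
      ι R v * ι R (∑ j, (c 0 j.succ - c j.succ 0) • f j) +
        ∑ i, ∑ j, c i.succ j.succ • (ι R (f i) * ι R (f j)) := by
  simp only [Fin.sum_univ_succ, Fin.cons_zero, Fin.cons_succ, ι_sq_zero, smul_zero, zero_add,
    map_sum, map_sub, map_smul, mul_sub, Finset.mul_sum, mul_smul_comm, ι_mul_ι_comm (f _) v,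
    smul_neg, sub_smul, Finset.sum_sub_distrib, Finset.sum_neg_distrib, Finset.sum_add_distrib]
  abel

end CommRing

section Field

variable {K M : Type*} [Field K] [AddCommGroup M] [Module K M]

theorem exists_ι_mul_ι_eq_smul_add_smul_add_smul (a b c : M) (p q r : K) :
    ∃ v w : M, p • (ι K a * ι K b) + q • (ι K a * ι K c) + r • (ι K b * ι K c) = ι K v * ι K w := by
  rcases ne_or_eq p 0 with hp | rfl
  · refine ⟨a - (r / p) • c, p • b + q • c, ?_⟩
    simp only [map_sub, map_add, map_smul, sub_mul, mul_add, smul_mul_assoc, mul_smul_comm,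
      ι_sq_zero, ι_mul_ι_comm c b, smul_zero, smul_neg]
    match_scalars <;> field_simp
  rcases ne_or_eq q 0 with hq | rfl
  · refine ⟨a + (r / q) • b, q • c, ?_⟩
    simp only [map_add, map_smul, add_mul, smul_mul_assoc, mul_smul_comm]
    match_scalars <;> field_simp
  · exact ⟨r • b, c, by simp⟩

theorem exists_ι_mul_ι_eq_sum_fin_three (f : Fin 3 → M) (d : Fin 3 → Fin 3 → K) :
    ∃ v w : M, ∑ i, ∑ j, d i j • (ι K (f i) * ι K (f j)) = ι K v * ι K w := by
  obtain ⟨v, w, h⟩ := exists_ι_mul_ι_eq_smul_add_smul_add_smul (f 0) (f 1) (f 2)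
    (d 0 1 - d 1 0) (d 0 2 - d 2 0) (d 1 2 - d 2 1)
  refine ⟨v, w, ?_⟩
  rw [← h]
  simp only [Fin.sum_univ_three, ι_sq_zero, smul_zero, ι_mul_ι_comm (f 1) (f 0),
    ι_mul_ι_comm (f 2) (f 0), ι_mul_ι_comm (f 2) (f 1)]
  module

end Field

theorem pencil_meets_decomposables (L : Type*) [AddCommGroup L] [Module ℂ L]
    (hdim : Module.finrank ℂ L = 4)
    (α : ExteriorAlgebra ℂ L) (hα : α ∈ ⋀[ℂ]^2 L)
    (v₁ : L) (hv₁ : v₁ ≠ 0) :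
    ∃ u v w : L, α = ι ℂ v₁ * ι ℂ u + ι ℂ v * ι ℂ w := by
  obtain ⟨f, hf⟩ := exists_span_range_fin_cons_eq_top (n := 3) hdim hv₁
  obtain ⟨c, rfl⟩ := exists_eq_sum_smul_ι_mul_ι hf hα
  obtain ⟨v, w, hvw⟩ := exists_ι_mul_ι_eq_sum_fin_three f fun i j ↦ c i.succ j.succ
  exact ⟨_, v, w, by rw [sum_smul_ι_fin_cons_mul_ι_fin_cons, hvw]⟩
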